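/- There exists a hyperbolic triangle all of whose interior angles equal 2π/7; more generally, for any α, β, γ > 0 with α + β + γ < π there exists a hyperbolic triangle with angles α, β, γ. -/

import Mathlib

noncomputable def distH (u v : EuclideanSpace ℝ (Fin 2)) : ℝ :=
  2 * Real.arsinh (‖u - v‖ / Real.sqrt ((1 - ‖u‖ ^ 2) * (1 - ‖v‖ ^ 2)))

/-- The points `a b c` in the Poincaré disk form a hyperbolic triangle whose interior
angles (characterized by the hyperbolic law of cosines in terms of the hyperbolic
side lengths) are `α` at `a`, `β` at `b` and `γ` at `c`. -/
noncomputable def TriangleWithAngles (a b c : EuclideanSpace ℝ (Fin 2))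
    (α β γ : ℝ) : Prop :=
  ‖a‖ < 1 ∧ ‖b‖ < 1 ∧ ‖c‖ < 1 ∧ a ≠ b ∧ b ≠ c ∧ a ≠ c ∧
  Real.cos α = (Real.cosh (distH a b) * Real.cosh (distH a c) - Real.cosh (distH b c)) /
      (Real.sinh (distH a b) * Real.sinh (distH a c)) ∧
  Real.cos β = (Real.cosh (distH b a) * Real.cosh (distH b c) - Real.cosh (distH a c)) /
      (Real.sinh (distH b a) * Real.sinh (distH b c)) ∧
  Real.cos γ = (Real.cosh (distH c a) * Real.cosh (distH c b) - Real.cosh (distH a b)) /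
      (Real.sinh (distH c a) * Real.sinh (distH c b))

/-!
Put the vertex with angle `α` at the centre of the disk and the other two on rays enclosing
the angle `α`, at the hyperbolic distances that the dual law of cosines
`cosh a = (cos β cos γ + cos α) / (sin β sin γ)` prescribes. The model is conformal at the
centre, so the hyperbolic law of cosines holds there with the Euclidean angle, and this forces
the third side to have its prescribed length too. The angles at the other two vertices then
come out right by algebra: when `α + β + γ < π`, minus the Gram determinant of the angles is
positive, all prescribed `cosh`s exceed `1`, and the dual law of cosines inverts the law of
cosines.
-/

open Real InnerProductGeometry

lemma one_sub_norm_sq_pos {E : Type*} [SeminormedAddGroup E] {u : E} (hu : ‖u‖ < 1) :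
    0 < 1 - ‖u‖ ^ 2 := by
  nlinarith [norm_nonneg u]

lemma distH_comm (u v : EuclideanSpace ℝ (Fin 2)) : distH u v = distH v u := by
  rw [distH, distH, norm_sub_rev, mul_comm (1 - ‖u‖ ^ 2)]

lemma distH_nonneg (u v : EuclideanSpace ℝ (Fin 2)) : 0 ≤ distH u v :=
  mul_nonneg zero_le_two (arsinh_nonneg_iff.mpr (by positivity))

lemma sinh_distH (u v : EuclideanSpace ℝ (Fin 2)) :
    sinh (distH u v) = √(cosh (distH u v) ^ 2 - 1) := by
  rw [cosh_sq, add_sub_cancel_right,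
    sqrt_sq (sinh_nonneg_iff.mpr (distH_nonneg u v))]

lemma ne_of_one_lt_cosh_distH {u v : EuclideanSpace ℝ (Fin 2)}
    (h : 1 < cosh (distH u v)) : u ≠ v := by
  rintro rfl
  simp [distH] at h

lemma cosh_distH {u v : EuclideanSpace ℝ (Fin 2)} (hu : ‖u‖ < 1) (hv : ‖v‖ < 1) :
    cosh (distH u v) = 1 + 2 * ‖u - v‖ ^ 2 / ((1 - ‖u‖ ^ 2) * (1 - ‖v‖ ^ 2)) := by
  have hP := mul_pos (one_sub_norm_sq_pos hu) (one_sub_norm_sq_pos hv)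
  rw [distH, cosh_two_mul, cosh_arsinh, sinh_arsinh, sq_sqrt (by positivity), div_pow,
    sq_sqrt hP.le]
  ring

lemma cosh_distH_zero {u : EuclideanSpace ℝ (Fin 2)} (hu : ‖u‖ < 1) :
    cosh (distH 0 u) = (1 + ‖u‖ ^ 2) / (1 - ‖u‖ ^ 2) := by
  have := (one_sub_norm_sq_pos hu).ne'
  rw [cosh_distH (by simp) hu, zero_sub, norm_neg, norm_zero]
  field_simp
  ring

lemma sinh_distH_zero {u : EuclideanSpace ℝ (Fin 2)} (hu : ‖u‖ < 1) :
    sinh (distH 0 u) = 2 * ‖u‖ / (1 - ‖u‖ ^ 2) := by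
  have hpos := one_sub_norm_sq_pos hu
  rw [sinh_distH, cosh_distH_zero hu,
    ← sqrt_sq (by positivity : 0 ≤ 2 * ‖u‖ / (1 - ‖u‖ ^ 2))]
  congr 1
  field_simp
  ring

/-- The hyperbolic law of cosines at the centre of the disk, where the model is conformal. -/
lemma cosh_distH_eq_of_zero {u v : EuclideanSpace ℝ (Fin 2)} (hu : ‖u‖ < 1)
    (hv : ‖v‖ < 1) :
    cosh (distH u v) = cosh (distH 0 u) * cosh (distH 0 v) -
      sinh (distH 0 u) * sinh (distH 0 v) * cos (angle u v) := by
  have := (one_sub_norm_sq_pos hu).ne'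
  have := (one_sub_norm_sq_pos hv).ne'
  rw [cosh_distH hu hv, cosh_distH_zero hu, cosh_distH_zero hv, sinh_distH_zero hu,
    sinh_distH_zero hv, norm_sub_sq_real, ← cos_angle_mul_norm_mul_norm]
  field_simp
  ring

lemma exists_cosh_distH_zero_smul_eq {C : ℝ} (hC : 1 < C) {e : EuclideanSpace ℝ (Fin 2)}
    (he : ‖e‖ = 1) :
    ∃ t : ℝ, 0 < t ∧ ‖t • e‖ < 1 ∧ cosh (distH 0 (t • e)) = C := by
  have hq : 0 < (C - 1) / (C + 1) := div_pos (by linarith) (by linarith)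
  have hq1 : (C - 1) / (C + 1) < 1 := by rw [div_lt_one (by linarith)]; linarith
  have hnorm : ‖√((C - 1) / (C + 1)) • e‖ = √((C - 1) / (C + 1)) := by
    rw [norm_smul, he, mul_one, norm_of_nonneg (sqrt_nonneg _)]
  have hlt : ‖√((C - 1) / (C + 1)) • e‖ < 1 := by
    rw [hnorm, sqrt_lt' one_pos, one_pow]; exact hq1
  refine ⟨_, sqrt_pos.mpr hq, hlt, ?_⟩
  rw [cosh_distH_zero hlt, hnorm, sq_sqrt hq.le]
  have : C + 1 ≠ 0 := by linarith
  field_simp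
  ring

section Angles

noncomputable def coshOppositeSide (α β γ : ℝ) : ℝ :=
  (cos β * cos γ + cos α) / (sin β * sin γ)

/-- Minus the determinant of `!![1, -cos γ, -cos β; -cos γ, 1, -cos α; -cos β, -cos α, 1]`. -/
noncomputable def negGramDet (α β γ : ℝ) : ℝ :=
  cos α ^ 2 + cos β ^ 2 + cos γ ^ 2 + 2 * cos α * cos β * cos γ - 1

lemma coshOppositeSide_comm (α β γ : ℝ) :
    coshOppositeSide α β γ = coshOppositeSide α γ β := by
  rw [coshOppositeSide, coshOppositeSide, mul_comm (cos β), mul_comm (sin β)]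

variable {α β γ : ℝ}

lemma neg_cos_add_lt_cos (hα : 0 < α) (hβ : 0 < β) (hγ : 0 < γ) (h : α + β + γ < π) :
    -cos (β + γ) < cos α := by
  rw [← cos_pi_sub]
  exact cos_lt_cos_of_nonneg_of_le_pi hα.le (by linarith) (by linarith)

lemma one_lt_coshOppositeSide (hα : 0 < α) (hβ : 0 < β) (hγ : 0 < γ)
    (h : α + β + γ < π) :
    1 < coshOppositeSide α β γ := by
  have hsin : 0 < sin β * sin γ :=
    mul_pos (sin_pos_of_pos_of_lt_pi hβ (by linarith))
      (sin_pos_of_pos_of_lt_pi hγ (by linarith))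
  have := neg_cos_add_lt_cos hα hβ hγ h
  rw [cos_add] at this
  rw [coshOppositeSide, one_lt_div hsin]
  linarith

lemma negGramDet_pos (hα : 0 < α) (hβ : 0 < β) (hγ : 0 < γ) (h : α + β + γ < π) :
    0 < negGramDet α β γ := by
  have hsum : 0 < cos γ + cos (α + β) := by
    linarith [neg_cos_add_lt_cos hγ hα hβ (by linarith)]
  have hdiff : 0 < cos γ + cos (α - β) := by
    have := mul_pos (sin_pos_of_pos_of_lt_pi hα (by linarith))
      (sin_pos_of_pos_of_lt_pi hβ (by linarith))
    rw [cos_add] at hsum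
    rw [cos_sub]
    linarith
  have hfactor : negGramDet α β γ = (cos γ + cos (α - β)) * (cos γ + cos (α + β)) := by
    rw [negGramDet, cos_add, cos_sub]
    linear_combination
      (sin β ^ 2) * sin_sq_add_cos_sq α + (1 - cos α ^ 2) * sin_sq_add_cos_sq β
  rw [hfactor]
  exact mul_pos hdiff hsum

lemma coshOppositeSide_sq_sub_one (hβ : sin β ≠ 0) (hγ : sin γ ≠ 0) :
    coshOppositeSide α β γ ^ 2 - 1 = negGramDet α β γ / (sin β * sin γ) ^ 2 := by
  rw [coshOppositeSide, negGramDet]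
  field_simp
  linear_combination
    -(sin γ ^ 2) * sin_sq_add_cos_sq β - (1 - cos β ^ 2) * sin_sq_add_cos_sq γ

lemma cos_eq_of_coshOppositeSide (hα : 0 < α) (hβ : 0 < β) (hγ : 0 < γ)
    (h : α + β + γ < π) :
    cos α = (coshOppositeSide γ α β * coshOppositeSide β α γ - coshOppositeSide α β γ) /
      (√(coshOppositeSide γ α β ^ 2 - 1) * √(coshOppositeSide β α γ ^ 2 - 1)) := by
  have hsα := sin_pos_of_pos_of_lt_pi hα (by linarith)
  have hsβ := sin_pos_of_pos_of_lt_pi hβ (by linarith)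
  have hsγ := sin_pos_of_pos_of_lt_pi hγ (by linarith)
  have hD := negGramDet_pos hα hβ hγ h
  have hγαβ : negGramDet γ α β = negGramDet α β γ := by unfold negGramDet; ring
  have hβαγ : negGramDet β α γ = negGramDet α β γ := by unfold negGramDet; ring
  rw [coshOppositeSide_sq_sub_one hsα.ne' hsβ.ne', coshOppositeSide_sq_sub_one hsα.ne' hsγ.ne',
    hγαβ, hβαγ, sqrt_div' _ (by positivity), sqrt_div' _ (by positivity),
    sqrt_sq (by positivity), sqrt_sq (by positivity), div_mul_div_comm, mul_self_sqrt hD.le]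
  unfold coshOppositeSide
  field_simp
  unfold negGramDet
  linear_combination (cos β * cos γ + cos α) * sin_sq_add_cos_sq α

end Angles

theorem exists_triangleWithAngles {α β γ : ℝ} (hα : 0 < α) (hβ : 0 < β) (hγ : 0 < γ)
    (h : α + β + γ < π) : ∃ a b c, TriangleWithAngles a b c α β γ := by
  have hab1 := one_lt_coshOppositeSide hγ hα hβ (by linarith)
  have hac1 := one_lt_coshOppositeSide hβ hα hγ (by linarith)
  obtain ⟨t, ht, hb, hab⟩ := exists_cosh_distH_zero_smul_eq hab1 (e := !₂[1, 0])
    (by simp [EuclideanSpace.norm_eq])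
  obtain ⟨s, hs, hc, hac⟩ := exists_cosh_distH_zero_smul_eq hac1 (e := !₂[cos α, sin α])
    (by simp [EuclideanSpace.norm_eq])
  set b := t • !₂[(1 : ℝ), 0]
  set c := s • !₂[cos α, sin α]
  have hangle : cos (angle b c) = cos α := by
    rw [angle_smul_left_of_pos _ _ ht, angle_smul_right_of_pos _ _ hs, cos_angle]
    simp [EuclideanSpace.norm_eq, PiLp.inner_apply, Fin.sum_univ_two]
  have hbc : cosh (distH b c) = coshOppositeSide α β γ := by
    have : 0 < √(coshOppositeSide γ α β ^ 2 - 1) * √(coshOppositeSide β α γ ^ 2 - 1) :=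
      mul_pos (sqrt_pos.mpr (by nlinarith)) (sqrt_pos.mpr (by nlinarith))
    rw [cosh_distH_eq_of_zero hb hc, sinh_distH, sinh_distH, hab, hac, hangle,
      cos_eq_of_coshOppositeSide hα hβ hγ h, mul_div_cancel₀ _ this.ne']
    ring
  refine ⟨0, b, c, by simp, hb, hc, ne_of_one_lt_cosh_distH (hab ▸ hab1),
    ne_of_one_lt_cosh_distH (hbc ▸ one_lt_coshOppositeSide hα hβ hγ h),
    ne_of_one_lt_cosh_distH (hac ▸ hac1), ?_, ?_, ?_⟩ <;>
    simp only [sinh_distH, distH_comm b 0, distH_comm c 0, distH_comm c b, hab, hac, hbc]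
  · exact cos_eq_of_coshOppositeSide hα hβ hγ h
  · rw [coshOppositeSide_comm γ]
    exact cos_eq_of_coshOppositeSide hβ hα hγ (by linarith)
  · rw [coshOppositeSide_comm β, coshOppositeSide_comm α]
    exact cos_eq_of_coshOppositeSide hγ hα hβ (by linarith)

/-- For all `α, β, γ > 0` with `α + β + γ < π` there is a hyperbolic triangle with these
angles; in particular there is one with all angles equal to `2π/7`. -/
theorem stmt18 :
    (∀ α β γ : ℝ, 0 < α → 0 < β → 0 < γ → α + β + γ < Real.pi →
      ∃ a b c : EuclideanSpace ℝ (Fin 2), TriangleWithAngles a b c α β γ) ∧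
    (∃ a b c : EuclideanSpace ℝ (Fin 2),
      TriangleWithAngles a b c (2 * Real.pi / 7) (2 * Real.pi / 7) (2 * Real.pi / 7)) := by
  have hangle : 0 < 2 * π / 7 := by positivity
  exact ⟨fun α β γ ↦ exists_triangleWithAngles,
    exists_triangleWithAngles hangle hangle hangle (by linarith [pi_pos])⟩
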